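/- arXiv:2512.16258 — 2 statements merged into one kernel-verified Lean document; each statement's English description precedes it below -/
import Mathlib

section
/- Extra symmetry for equal diffusivities d₂ = d₃ (Theorem 2, finite form of the operator (v+w)∂_w): Suppose d₂ = d₃ and (u, v, w) solves the system S(Ψ; d₁,d₂,d₂; k) on an open set Ω ⊆ ℝ³. Then for every real ε, the triple (u, v, e^ε·w + (e^ε − 1)·v) also solves S(Ψ; d₁,d₂,d₂; k) on Ω. -/
/-- Partial derivative with respect to `t` of a function of `(t,x,y)`. -/
noncomputable def pdT (f : ℝ × ℝ × ℝ → ℝ) (p : ℝ × ℝ × ℝ) : ℝ := fderiv ℝ f p (1, 0, 0)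
/-- Partial derivative with respect to `x`. -/
noncomputable def pdX (f : ℝ × ℝ × ℝ → ℝ) (p : ℝ × ℝ × ℝ) : ℝ := fderiv ℝ f p (0, 1, 0)
/-- Partial derivative with respect to `y`. -/
noncomputable def pdY (f : ℝ × ℝ × ℝ → ℝ) (p : ℝ × ℝ × ℝ) : ℝ := fderiv ℝ f p (0, 0, 1)
/-- `Ψ_x` for a function of `(x,y)`. -/
noncomputable def psiX (Ψ : ℝ × ℝ → ℝ) (q : ℝ × ℝ) : ℝ := fderiv ℝ Ψ q (1, 0)
/-- `Ψ_y` for a function of `(x,y)`. -/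
noncomputable def psiY (Ψ : ℝ × ℝ → ℝ) (q : ℝ × ℝ) : ℝ := fderiv ℝ Ψ q (0, 1)

/-- `(u,v,w)` solves the convective Lotka–Volterra system `S(Ψ; d₁,d₂,d₃; k)` on `Ω`. -/
def SolvesS (Ψ : ℝ × ℝ → ℝ) (d₁ d₂ d₃ k : ℝ) (u v w : ℝ × ℝ × ℝ → ℝ)
    (Ω : Set (ℝ × ℝ × ℝ)) : Prop :=
  ∀ p ∈ Ω,
    (pdT u p + psiY Ψ p.2 * pdX u p - psiX Ψ p.2 * pdY u p
      = d₁ * (pdX (pdX u) p + pdY (pdY u) p) - k * u p * v p) ∧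
    (pdT v p + psiY Ψ p.2 * pdX v p - psiX Ψ p.2 * pdY v p
      = d₂ * (pdX (pdX v) p + pdY (pdY v) p) - k * u p * v p) ∧
    (pdT w p + psiY Ψ p.2 * pdX w p - psiX Ψ p.2 * pdY w p
      = d₃ * (pdX (pdX w) p + pdY (pdY w) p) + k * u p * v p)

/-!
The new third component `e^ε w + (e^ε - 1) v` is a linear combination of `w` and `v`.
Since `d₂ = d₃`, both are acted on by the same linear convection–diffusion operator, and
the reaction terms `+kuv` of `w` and `-kuv` of `v` combine to `(e^ε - (e^ε - 1)) kuv = kuv`.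
-/

section LinearCombination

variable {E : Type*} [NormedAddCommGroup E] [NormedSpace ℝ E] {f g : E → ℝ}

theorem fderiv_linear_comb_apply {p : E} (hf : DifferentiableAt ℝ f p)
    (hg : DifferentiableAt ℝ g p) (a b : ℝ) (v : E) :
    fderiv ℝ (fun q => a * f q + b * g q) p v = a * fderiv ℝ f p v + b * fderiv ℝ g p v := by
  rw [fderiv_fun_add (hf.const_mul a) (hg.const_mul b), fderiv_const_mul hf,
    fderiv_const_mul hg]
  rfl

theorem ContDiff.differentiable_fderiv_apply (hf : ContDiff ℝ 2 f) (v : E) :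
    Differentiable ℝ (fun p => fderiv ℝ f p v) :=
  ((hf.fderiv_right (by norm_num)).differentiable one_ne_zero).clm_apply
    (differentiable_const v)

theorem fderiv_fderiv_linear_comb_apply (hf : ContDiff ℝ 2 f) (hg : ContDiff ℝ 2 g)
    (a b : ℝ) (v w : E) (p : E) :
    fderiv ℝ (fun q => fderiv ℝ (fun r => a * f r + b * g r) q v) p w
      = a * fderiv ℝ (fun q => fderiv ℝ f q v) p w
        + b * fderiv ℝ (fun q => fderiv ℝ g q v) p w := by
  have hfirst : (fun q => fderiv ℝ (fun r => a * f r + b * g r) q v)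
      = fun q => a * fderiv ℝ f q v + b * fderiv ℝ g q v := by
    funext q
    exact fderiv_linear_comb_apply (hf.differentiable (by norm_num) q)
      (hg.differentiable (by norm_num) q) a b v
  rw [hfirst]
  exact fderiv_linear_comb_apply (hf.differentiable_fderiv_apply v p)
    (hg.differentiable_fderiv_apply v p) a b w

end LinearCombination

noncomputable def convDiff (Ψ : ℝ × ℝ → ℝ) (d : ℝ) (f : ℝ × ℝ × ℝ → ℝ) (p : ℝ × ℝ × ℝ) : ℝ :=
  pdT f p + psiY Ψ p.2 * pdX f p - psiX Ψ p.2 * pdY f p - d * (pdX (pdX f) p + pdY (pdY f) p)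

theorem convDiff_linear_comb (Ψ : ℝ × ℝ → ℝ) (d a b : ℝ) {f g : ℝ × ℝ × ℝ → ℝ}
    (hf : ContDiff ℝ 2 f) (hg : ContDiff ℝ 2 g) (p : ℝ × ℝ × ℝ) :
    convDiff Ψ d (fun q => a * f q + b * g q) p = a * convDiff Ψ d f p + b * convDiff Ψ d g p := by
  have hfirst (v : ℝ × ℝ × ℝ) := fderiv_linear_comb_apply
    (hf.differentiable (by norm_num) p) (hg.differentiable (by norm_num) p) a b v
  have hxx : pdX (pdX (fun q => a * f q + b * g q)) p = a * pdX (pdX f) p + b * pdX (pdX g) p :=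
    fderiv_fderiv_linear_comb_apply hf hg a b _ _ p
  have hyy : pdY (pdY (fun q => a * f q + b * g q)) p = a * pdY (pdY f) p + b * pdY (pdY g) p :=
    fderiv_fderiv_linear_comb_apply hf hg a b _ _ p
  rw [convDiff, convDiff, convDiff, hxx, hyy]
  simp only [pdT, pdX, pdY, hfirst]
  ring

theorem extra_symmetry_d2_eq_d3_general
    (d₁ d₂ k : ℝ) (Ψ : ℝ × ℝ → ℝ)
    (Ω : Set (ℝ × ℝ × ℝ))
    (u v w : ℝ × ℝ × ℝ → ℝ)
    (hv : ContDiff ℝ 2 v) (hw : ContDiff ℝ 2 w)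
    (h : SolvesS Ψ d₁ d₂ d₂ k u v w Ω) :
    ∀ ε : ℝ,
      SolvesS Ψ d₁ d₂ d₂ k u v
        (fun p => Real.exp ε * w p + (Real.exp ε - 1) * v p) Ω := by
  intro ε p hp
  obtain ⟨hu_eq, hv_eq, hw_eq⟩ := h p hp
  refine ⟨hu_eq, hv_eq, ?_⟩
  have hcomb := convDiff_linear_comb Ψ d₂ (Real.exp ε) (Real.exp ε - 1) hw hv p
  simp only [convDiff] at hcomb
  linear_combination hcomb + Real.exp ε * hw_eq + (Real.exp ε - 1) * hv_eq

/-- Extra symmetry for equal diffusivities `d₂ = d₃` (finite form of `(v+w)∂_w`):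
if `(u,v,w)` solves `S(Ψ; d₁,d₂,d₂; k)` on an open set `Ω`, then for every real `ε`
the triple `(u, v, e^ε·w + (e^ε − 1)·v)` also solves `S(Ψ; d₁,d₂,d₂; k)` on `Ω`. -/
theorem extra_symmetry_d2_eq_d3
    (d₁ d₂ k : ℝ) (Ψ : ℝ × ℝ → ℝ) (hΨ : ContDiff ℝ 1 Ψ)
    (Ω : Set (ℝ × ℝ × ℝ)) (hΩ : IsOpen Ω)
    (u v w : ℝ × ℝ × ℝ → ℝ)
    (hu : ContDiff ℝ 2 u) (hv : ContDiff ℝ 2 v) (hw : ContDiff ℝ 2 w)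
    (h : SolvesS Ψ d₁ d₂ d₂ k u v w Ω) :
    ∀ ε : ℝ,
      SolvesS Ψ d₁ d₂ d₂ k u v
        (fun p => Real.exp ε * w p + (Real.exp ε - 1) * v p) Ω :=
  extra_symmetry_d2_eq_d3_general d₁ d₂ k Ψ Ω u v w hv hw h
end

section
/- Coth-type exact solution of system (2-23) with equal diffusivities: Let d > 0 and α₁, α₂, C₂, C₃ be real constants; set C₁ = 10d(α₁² + α₂²) and θ(t,x,y) = C₁t + (α₁x + α₂y)·sin 2t + (α₁y − α₂x)·cos 2t. On the open set Ω = {(t,x,y) ∈ ℝ³ : θ(t,x,y) ≠ 0}, the functions u = (3C₁/5)·(1 + coth θ)², v = −12C₁/5 + u, w = C₂ + C₃·exp(10θ) − u satisfy system (2-23) with d₁ = d₂ = d₃ = d, i.e. u_t + 2y u_x − 2x u_y = d(u_xx + u_yy) − uv, v_t + 2y v_x − 2x v_y = d(v_xx + v_yy) − uv, w_t + 2y w_x − 2x w_y = d(w_xx + w_yy) + uv, at every point of Ω. -/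
/-- `(u,v,w)` solves system (2-23), the convective Lotka–Volterra system with
stream function `Ψ = x² + y²` and `k = 1`, on `Ω`. -/
def Solves223 (d₁ d₂ d₃ : ℝ) (u v w : ℝ × ℝ × ℝ → ℝ) (Ω : Set (ℝ × ℝ × ℝ)) : Prop :=
  ∀ p ∈ Ω,
    (pdT u p + 2 * p.2.2 * pdX u p - 2 * p.2.1 * pdY u p
      = d₁ * (pdX (pdX u) p + pdY (pdY u) p) - u p * v p) ∧
    (pdT v p + 2 * p.2.2 * pdX v p - 2 * p.2.1 * pdY v p
      = d₂ * (pdX (pdX v) p + pdY (pdY v) p) - u p * v p) ∧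
    (pdT w p + 2 * p.2.2 * pdX w p - 2 * p.2.1 * pdY w p
      = d₃ * (pdX (pdX w) p + pdY (pdY w) p) + u p * v p)

/-- The phase `θ(t,x,y) = C₁t + (α₁x + α₂y)·sin 2t + (α₁y − α₂x)·cos 2t`. -/
noncomputable def theta (α₁ α₂ C₁ : ℝ) (p : ℝ × ℝ × ℝ) : ℝ :=
  C₁ * p.1 + (α₁ * p.2.1 + α₂ * p.2.2) * Real.sin (2 * p.1)
    + (α₁ * p.2.2 - α₂ * p.2.1) * Real.cos (2 * p.1)

/-- `coth z = cosh z / sinh z`. -/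
noncomputable def coth (z : ℝ) : ℝ := Real.cosh z / Real.sinh z

open Topology

noncomputable def convDeriv (f : ℝ × ℝ × ℝ → ℝ) (p : ℝ × ℝ × ℝ) : ℝ :=
  pdT f p + 2 * p.2.2 * pdX f p - 2 * p.2.1 * pdY f p

noncomputable def laplacianXY (f : ℝ × ℝ × ℝ → ℝ) (p : ℝ × ℝ × ℝ) : ℝ :=
  pdX (pdX f) p + pdY (pdY f) p

theorem solves223_iff {d₁ d₂ d₃ : ℝ} {u v w : ℝ × ℝ × ℝ → ℝ} {Ω : Set (ℝ × ℝ × ℝ)} :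
    Solves223 d₁ d₂ d₃ u v w Ω ↔ ∀ p ∈ Ω,
      convDeriv u p = d₁ * laplacianXY u p - u p * v p ∧
      convDeriv v p = d₂ * laplacianXY v p - u p * v p ∧
      convDeriv w p = d₃ * laplacianXY w p + u p * v p :=
  Iff.rfl

theorem fderiv_comp_apply_of_hasDerivAt {E : Type*} [NormedAddCommGroup E] [NormedSpace ℝ E]
    {f : E → ℝ} {g : ℝ → ℝ} {g' : ℝ} {p : E} (hg : HasDerivAt g g' (f p))
    (hf : DifferentiableAt ℝ f p) (v : E) :
    fderiv ℝ (fun q => g (f q)) p v = g' * fderiv ℝ f p v := by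
  have h : HasFDerivAt (fun q => g (f q)) _ p := hg.comp_hasFDerivAt p hf.hasFDerivAt
  rw [h.fderiv]
  simp only [smul_apply, smul_eq_mul]

section Theta

variable (α₁ α₂ C₁ : ℝ)

noncomputable def thetaX (t : ℝ) : ℝ := α₁ * Real.sin (2 * t) - α₂ * Real.cos (2 * t)

noncomputable def thetaY (t : ℝ) : ℝ := α₂ * Real.sin (2 * t) + α₁ * Real.cos (2 * t)

theorem theta_eq (p : ℝ × ℝ × ℝ) :
    theta α₁ α₂ C₁ p = C₁ * p.1 + thetaX α₁ α₂ p.1 * p.2.1 + thetaY α₁ α₂ p.1 * p.2.2 := by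
  simp only [theta, thetaX, thetaY]
  ring

theorem thetaX_sq_add_thetaY_sq (t : ℝ) :
    thetaX α₁ α₂ t ^ 2 + thetaY α₁ α₂ t ^ 2 = α₁ ^ 2 + α₂ ^ 2 := by
  simp only [thetaX, thetaY]
  linear_combination (α₁ ^ 2 + α₂ ^ 2) * Real.sin_sq_add_cos_sq (2 * t)

theorem differentiable_theta : Differentiable ℝ (theta α₁ α₂ C₁) := by
  unfold theta; fun_prop

theorem hasDerivAt_thetaX (t : ℝ) : HasDerivAt (thetaX α₁ α₂) (2 * thetaY α₁ α₂ t) t := by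
  have h2t := (hasDerivAt_id' t).const_mul (2 : ℝ)
  refine (((h2t.sin).const_mul α₁).fun_sub ((h2t.cos).const_mul α₂)).congr_deriv ?_
  simp only [thetaY]
  ring

theorem hasDerivAt_thetaY (t : ℝ) : HasDerivAt (thetaY α₁ α₂) (-(2 * thetaX α₁ α₂ t)) t := by
  have h2t := (hasDerivAt_id' t).const_mul (2 : ℝ)
  refine (((h2t.sin).const_mul α₂).fun_add ((h2t.cos).const_mul α₁)).congr_deriv ?_
  simp only [thetaX]
  ring

theorem fderiv_theta_apply (p v : ℝ × ℝ × ℝ) :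
    fderiv ℝ (theta α₁ α₂ C₁) p v =
      (C₁ + 2 * (thetaY α₁ α₂ p.1 * p.2.1 - thetaX α₁ α₂ p.1 * p.2.2)) * v.1
        + thetaX α₁ α₂ p.1 * v.2.1 + thetaY α₁ α₂ p.1 * v.2.2 := by
  have ht := hasFDerivAt_fst (𝕜 := ℝ) (p := p)
  have hx := (hasFDerivAt_snd (𝕜 := ℝ) (p := p)).fst
  have hy := (hasFDerivAt_snd (𝕜 := ℝ) (p := p)).snd
  have hθ : HasFDerivAt
      (fun q : ℝ × ℝ × ℝ => C₁ * q.1 + thetaX α₁ α₂ q.1 * q.2.1 + thetaY α₁ α₂ q.1 * q.2.2) _ p :=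
    ((ht.const_mul C₁).add
    (((hasDerivAt_thetaX α₁ α₂ p.1).comp_hasFDerivAt p ht).mul hx)).add
    (((hasDerivAt_thetaY α₁ α₂ p.1).comp_hasFDerivAt p ht).mul hy)
  rw [funext (theta_eq α₁ α₂ C₁), hθ.fderiv]
  simp only [Function.comp_apply, neg_smul, smul_neg, add_apply,
    smul_apply, ContinuousLinearMap.coe_fst', smul_eq_mul,
    ContinuousLinearMap.comp_apply, ContinuousLinearMap.coe_snd', neg_apply]
  ring

end Theta

section CompTheta

variable {α₁ α₂ C₁ : ℝ} {p : ℝ × ℝ × ℝ}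

theorem convDeriv_comp_theta {g : ℝ → ℝ} {g' : ℝ} (hg : HasDerivAt g g' (theta α₁ α₂ C₁ p)) :
    convDeriv (fun q => g (theta α₁ α₂ C₁ q)) p = C₁ * g' := by
  simp only [convDeriv, pdT, pdX, pdY,
    fderiv_comp_apply_of_hasDerivAt hg (differentiable_theta α₁ α₂ C₁ p), fderiv_theta_apply]
  ring

theorem fderiv_fderiv_comp_theta_apply {S : Set ℝ} (hS : IsOpen S) {g g' : ℝ → ℝ} {g'' : ℝ}
    (hg : ∀ z ∈ S, HasDerivAt g (g' z) z) (hg' : HasDerivAt g' g'' (theta α₁ α₂ C₁ p))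
    (hp : theta α₁ α₂ C₁ p ∈ S) {v : ℝ × ℝ × ℝ} (hv : v.1 = 0) :
    fderiv ℝ (fun q => fderiv ℝ (fun q => g (theta α₁ α₂ C₁ q)) q v) p v
      = g'' * (thetaX α₁ α₂ p.1 * v.2.1 + thetaY α₁ α₂ p.1 * v.2.2) ^ 2 := by
  set s : ℝ → ℝ := fun t => thetaX α₁ α₂ t * v.2.1 + thetaY α₁ α₂ t * v.2.2
  have hs : Differentiable ℝ s := fun t =>
    (((hasDerivAt_thetaX α₁ α₂ t).mul_const _).add
      ((hasDerivAt_thetaY α₁ α₂ t).mul_const _)).differentiableAt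
  have hθ := differentiable_theta α₁ α₂ C₁
  have hfirst : (fun q => fderiv ℝ (fun q => g (theta α₁ α₂ C₁ q)) q v) =ᶠ[𝓝 p]
      fun q => g' (theta α₁ α₂ C₁ q) * s q.1 := by
    filter_upwards [(hθ.continuous.continuousAt).preimage_mem_nhds (hS.mem_nhds hp)] with q hq
    rw [fderiv_comp_apply_of_hasDerivAt (hg _ hq) (hθ q), fderiv_theta_apply, hv]
    ring
  have hs_fst : fderiv ℝ (fun q : ℝ × ℝ × ℝ => s q.1) p v = 0 := by
    rw [fderiv_comp_apply_of_hasDerivAt (hs _).hasDerivAt differentiableAt_fst, fderiv_fst]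
    simp [hv]
  rw [hfirst.fderiv_eq,
    fderiv_fun_mul (c := fun q => g' (theta α₁ α₂ C₁ q)) (d := fun q => s q.1)
      (hg'.differentiableAt.comp p (hθ p)) ((hs _).comp p differentiableAt_fst)]
  simp only [add_apply, smul_apply, smul_eq_mul, hs_fst,
    mul_zero, zero_add, fderiv_comp_apply_of_hasDerivAt hg' (hθ p), fderiv_theta_apply, hv]
  ring

theorem laplacianXY_comp_theta {S : Set ℝ} (hS : IsOpen S) {g g' : ℝ → ℝ} {g'' : ℝ}
    (hg : ∀ z ∈ S, HasDerivAt g (g' z) z) (hg' : HasDerivAt g' g'' (theta α₁ α₂ C₁ p))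
    (hp : theta α₁ α₂ C₁ p ∈ S) :
    laplacianXY (fun q => g (theta α₁ α₂ C₁ q)) p = (α₁ ^ 2 + α₂ ^ 2) * g'' := by
  unfold laplacianXY pdX pdY
  rw [fderiv_fderiv_comp_theta_apply hS hg hg' hp rfl,
    fderiv_fderiv_comp_theta_apply hS hg hg' hp rfl, ← thetaX_sq_add_thetaY_sq α₁ α₂ p.1]
  ring

end CompTheta

section Riccati

variable {φ : ℝ → ℝ} {z : ℝ}

theorem HasDerivAt.const_mul_sq_of_riccati (hφ : HasDerivAt φ (2 * φ z - φ z ^ 2) z) (k : ℝ) :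
    HasDerivAt (fun z => k * φ z ^ 2) (2 * k * (2 * φ z ^ 2 - φ z ^ 3)) z :=
  ((hφ.pow 2).const_mul k).congr_deriv (by ring)

theorem HasDerivAt.const_mul_sq_deriv_of_riccati (hφ : HasDerivAt φ (2 * φ z - φ z ^ 2) z) (k : ℝ) :
    HasDerivAt (fun z => 2 * k * (2 * φ z ^ 2 - φ z ^ 3))
      (2 * k * (4 * φ z - 3 * φ z ^ 2) * (2 * φ z - φ z ^ 2)) z :=
  (((hφ.pow 2).const_mul 2).sub (hφ.pow 3)).const_mul (2 * k) |>.congr_deriv (by ring)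

end Riccati

theorem hasDerivAt_coth {z : ℝ} (hz : z ≠ 0) : HasDerivAt coth (1 - coth z ^ 2) z := by
  have hs : Real.sinh z ≠ 0 := Real.sinh_ne_zero.2 hz
  refine ((Real.hasDerivAt_cosh z).div (Real.hasDerivAt_sinh z) hs).congr_deriv ?_
  unfold coth
  field_simp

theorem hasDerivAt_one_add_coth {z : ℝ} (hz : z ≠ 0) :
    HasDerivAt (fun z => 1 + coth z) (2 * (1 + coth z) - (1 + coth z) ^ 2) z :=
  ((hasDerivAt_coth hz).const_add 1).congr_deriv (by ring)

theorem hasDerivAt_const_mul_exp_ten_mul (c z : ℝ) :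
    HasDerivAt (fun z => c * Real.exp (10 * z)) (10 * (c * Real.exp (10 * z))) z :=
  (((hasDerivAt_id' z).const_mul 10).exp.const_mul c).congr_deriv (by ring)

theorem coth_exact_solution_general
    (d α₁ α₂ C₂ C₃ : ℝ) :
    Solves223 d d d
      (fun p => (3 * (10 * d * (α₁ ^ 2 + α₂ ^ 2)) / 5) *
        (1 + coth (theta α₁ α₂ (10 * d * (α₁ ^ 2 + α₂ ^ 2)) p)) ^ 2)
      (fun p => -(12 * (10 * d * (α₁ ^ 2 + α₂ ^ 2)) / 5)
        + (3 * (10 * d * (α₁ ^ 2 + α₂ ^ 2)) / 5) *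
          (1 + coth (theta α₁ α₂ (10 * d * (α₁ ^ 2 + α₂ ^ 2)) p)) ^ 2)
      (fun p => C₂ + C₃ * Real.exp (10 * theta α₁ α₂ (10 * d * (α₁ ^ 2 + α₂ ^ 2)) p)
        - (3 * (10 * d * (α₁ ^ 2 + α₂ ^ 2)) / 5) *
          (1 + coth (theta α₁ α₂ (10 * d * (α₁ ^ 2 + α₂ ^ 2)) p)) ^ 2)
      {p : ℝ × ℝ × ℝ | theta α₁ α₂ (10 * d * (α₁ ^ 2 + α₂ ^ 2)) p ≠ 0} := by
  rw [solves223_iff]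
  intro p (hp : _ ∈ ({0}ᶜ : Set ℝ))
  have hS : IsOpen ({0}ᶜ : Set ℝ) := isOpen_compl_singleton
  have hφ (z : ℝ) (hz : z ∈ ({0}ᶜ : Set ℝ)) := hasDerivAt_one_add_coth hz
  set k := 3 * (10 * d * (α₁ ^ 2 + α₂ ^ 2)) / 5
  have hu (z : ℝ) (hz : z ∈ ({0}ᶜ : Set ℝ)) := (hφ z hz).const_mul_sq_of_riccati k
  have hu' := (hφ _ hp).const_mul_sq_deriv_of_riccati k
  have hw (z : ℝ) (hz : z ∈ ({0}ᶜ : Set ℝ)) :=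
    ((hasDerivAt_const_mul_exp_ten_mul C₃ z).const_add C₂).fun_sub (hu z hz)
  have hw' := ((hasDerivAt_const_mul_exp_ten_mul C₃ _).const_mul 10).fun_sub hu'
  have hv (z : ℝ) (hz : z ∈ ({0}ᶜ : Set ℝ)) :=
    (hu z hz).const_add (-(12 * (10 * d * (α₁ ^ 2 + α₂ ^ 2)) / 5))
  rw [convDeriv_comp_theta (hu _ hp), laplacianXY_comp_theta hS hu hu' hp,
    convDeriv_comp_theta (hv _ hp), laplacianXY_comp_theta hS hv hu' hp,
    convDeriv_comp_theta (hw _ hp), laplacianXY_comp_theta hS hw hw' hp]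
  refine ⟨by ring, by ring, by ring⟩

/-- Coth-type exact solution of system (2-23) with `d₁ = d₂ = d₃ = d`:
with `C₁ = 10d(α₁²+α₂²)`, the functions `u = (3C₁/5)(1 + coth θ)²`,
`v = −12C₁/5 + u`, `w = C₂ + C₃e^{10θ} − u` solve (2-23) on `Ω = {θ ≠ 0}`. -/
theorem coth_exact_solution
    (d α₁ α₂ C₂ C₃ : ℝ) (hd : 0 < d) :
    Solves223 d d d
      (fun p => (3 * (10 * d * (α₁ ^ 2 + α₂ ^ 2)) / 5) *
        (1 + coth (theta α₁ α₂ (10 * d * (α₁ ^ 2 + α₂ ^ 2)) p)) ^ 2)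
      (fun p => -(12 * (10 * d * (α₁ ^ 2 + α₂ ^ 2)) / 5)
        + (3 * (10 * d * (α₁ ^ 2 + α₂ ^ 2)) / 5) *
          (1 + coth (theta α₁ α₂ (10 * d * (α₁ ^ 2 + α₂ ^ 2)) p)) ^ 2)
      (fun p => C₂ + C₃ * Real.exp (10 * theta α₁ α₂ (10 * d * (α₁ ^ 2 + α₂ ^ 2)) p)
        - (3 * (10 * d * (α₁ ^ 2 + α₂ ^ 2)) / 5) *
          (1 + coth (theta α₁ α₂ (10 * d * (α₁ ^ 2 + α₂ ^ 2)) p)) ^ 2)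
      {p : ℝ × ℝ × ℝ | theta α₁ α₂ (10 * d * (α₁ ^ 2 + α₂ ^ 2)) p ≠ 0} :=
  coth_exact_solution_general d α₁ α₂ C₂ C₃
end
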